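/- With the setup data fixed, let (v', a') be another pair consisting of a proper orthochronous Lorentz transformation v' and a' ∈ ℝ³, and apply the simultaneous Poincaré transformation: x ↦ x' = v'x, x₀ ↦ x₀' = v'x₀ + a', and (v, a) ↦ (ṽ, ã) = (v'vv'⁻¹, a' + v'a − v'vv'⁻¹a') (conjugation in the Poincaré group). Then ṽx' ≠ x', and the parameters computed from the transformed data coincide with the original ones: −η(x', ṽx') = −η(x, vx) (so ρ' = ρ), and (σ', τ', ν') = (σ, τ, ν), where ṽx₀' + ã − x₀' = σ'(ṽx' − x') + τ'·ṽx' + ν'·(x'∧ṽx'). (Invariance (3.12): all measurements are invariant under simultaneous Poincaré transformations of the observer and the holonomies.) -/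

import Mathlib

noncomputable section

/-- The Minkowski bilinear form `η` on `ℝ³`: `η(x,y) = -x⁰y⁰ + x¹y¹ + x²y²`. -/
def eta (x y : Fin 3 → ℝ) : ℝ := -(x 0 * y 0) + x 1 * y 1 + x 2 * y 2

/-- The Minkowski cross product `x∧y`: the unique vector with `η(x∧y, w) = det(x,y,w)`
for all `w`, where `det(x,y,w)` is the determinant of the matrix with columns `x`, `y`, `w`. -/
def mcross (x y : Fin 3 → ℝ) : Fin 3 → ℝ :=
  ![x 2 * y 1 - x 1 * y 2, x 2 * y 0 - x 0 * y 2, x 0 * y 1 - x 1 * y 0]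

private lemma eta_comm' (u w : Fin 3 → ℝ) : eta u w = eta w u := by
  simp only [eta]; ring

private lemma eta_combo (A B C : ℝ) (p q r z : Fin 3 → ℝ) :
    eta (A • (p - q) + B • p + C • r) z
      = A * (eta p z - eta q z) + B * eta p z + C * eta r z := by
  simp only [eta, Pi.add_apply, Pi.sub_apply, Pi.smul_apply, smul_eq_mul]; ring

private lemma mcross_orth₁ (u w : Fin 3 → ℝ) : eta (mcross u w) u = 0 := by
  simp [eta, mcross]; ring

private lemma mcross_orth₂ (u w : Fin 3 → ℝ) : eta (mcross u w) w = 0 := by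
  simp [eta, mcross]; ring

private lemma mcross_orth₃ (u w : Fin 3 → ℝ) : eta u (mcross u w) = 0 := by
  simp [eta, mcross]; ring

private lemma mcross_orth₄ (u w : Fin 3 → ℝ) : eta w (mcross u w) = 0 := by
  simp [eta, mcross]; ring

private lemma eta_mcross_self (u w : Fin 3 → ℝ) :
    eta (mcross u w) (mcross u w) = (eta u w) ^ 2 - eta u u * eta w w := by
  simp [eta, mcross]; ring

private lemma mcross_lorentz (f : (Fin 3 → ℝ) ≃ₗ[ℝ] (Fin 3 → ℝ))
    (hdet : LinearMap.det f.toLinearMap = 1) (u w z : Fin 3 → ℝ) :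
    eta (mcross (f u) (f w)) (f z) = eta (mcross u w) z := by
  set M := LinearMap.toMatrix' f.toLinearMap with hM
  have hMdet : M.det = 1 := by rw [hM, LinearMap.det_toMatrix']; exact hdet
  have happ : ∀ p, f p = M.mulVec p := by
    intro p; rw [hM, ← Matrix.toLin'_apply, Matrix.toLin'_toMatrix']; rfl
  rw [happ u, happ w, happ z]
  have hmain : eta (mcross (M.mulVec u) (M.mulVec w)) (M.mulVec z)
      = M.det * eta (mcross u w) z := by
    simp [eta, mcross, Matrix.mulVec, dotProduct, Fin.sum_univ_three,
      Matrix.det_fin_three]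
    ring
  rw [hmain, hMdet, one_mul]

/-- Invariance (3.12): the parameters `ρ, σ, τ, ν` are invariant under simultaneous
Poincaré transformations of the observer and conjugation of the holonomy. -/
theorem poincare_invariance_of_parameters
    (x x₀ a : Fin 3 → ℝ) (v : (Fin 3 → ℝ) ≃ₗ[ℝ] (Fin 3 → ℝ))
    (hx : eta x x = -1) (hx0 : 0 < x 0)
    (hv : ∀ u w : Fin 3 → ℝ, eta (v u) (v w) = eta u w)
    (hdet : LinearMap.det v.toLinearMap = 1)
    (horth : ∀ z : Fin 3 → ℝ, eta z z < 0 → 0 < z 0 → 0 < (v z) 0)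
    (hvx : v x ≠ x)
    (ρ σ τ ν : ℝ) (hρ : 0 < ρ) (hcosh : Real.cosh ρ = -eta x (v x))
    (hστν : v x₀ + a - x₀ = σ • (v x - x) + τ • (v x) + ν • mcross x (v x))
    (v' : (Fin 3 → ℝ) ≃ₗ[ℝ] (Fin 3 → ℝ)) (a' : Fin 3 → ℝ)
    (hv' : ∀ u w : Fin 3 → ℝ, eta (v' u) (v' w) = eta u w)
    (hdet' : LinearMap.det v'.toLinearMap = 1)
    (horth' : ∀ z : Fin 3 → ℝ, eta z z < 0 → 0 < z 0 → 0 < (v' z) 0) :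
    (v'.symm.trans (v.trans v')) (v' x) ≠ v' x ∧
    -eta (v' x) ((v'.symm.trans (v.trans v')) (v' x)) = -eta x (v x) ∧
    ∀ σ' τ' ν' : ℝ,
      (v'.symm.trans (v.trans v')) (v' x₀ + a')
          + (a' + v' a - (v'.symm.trans (v.trans v')) a') - (v' x₀ + a')
        = σ' • ((v'.symm.trans (v.trans v')) (v' x) - v' x)
          + τ' • (v'.symm.trans (v.trans v')) (v' x)
          + ν' • mcross (v' x) ((v'.symm.trans (v.trans v')) (v' x)) →
      σ' = σ ∧ τ' = τ ∧ ν' = ν := by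
  have hconjx : (v'.symm.trans (v.trans v')) (v' x) = v' (v x) := by
    simp [LinearEquiv.trans_apply, LinearEquiv.symm_apply_apply]
  set c := Real.cosh ρ with hcdef
  have hc : 1 < c := by
    rw [hcdef, Real.one_lt_cosh]; exact ne_of_gt hρ
  have cxy : eta x (v x) = -c := by linarith [hcosh]
  have cyx : eta (v x) x = -c := by rw [eta_comm']; exact cxy
  have cyy : eta (v x) (v x) = -1 := by rw [hv]; exact hx
  have cmx : eta (mcross x (v x)) x = 0 := mcross_orth₁ _ _
  have cmy : eta (mcross x (v x)) (v x) = 0 := mcross_orth₂ _ _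
  have cxm : eta x (mcross x (v x)) = 0 := mcross_orth₃ _ _
  have cym : eta (v x) (mcross x (v x)) = 0 := mcross_orth₄ _ _
  have cmm : eta (mcross x (v x)) (mcross x (v x)) = c ^ 2 - 1 := by
    rw [eta_mcross_self, cxy, hx, cyy]; ring
  refine ⟨?_, ?_, ?_⟩
  · rw [hconjx]
    intro h
    exact hvx (v'.injective h)
  · rw [hconjx, hv']
  · intro σ' τ' ν' heq
    rw [hconjx] at heq
    simp only [LinearEquiv.trans_apply, LinearEquiv.symm_apply_apply] at heq
    have heq2 : v' (v x₀ + a - x₀)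
        = σ' • (v' (v x) - v' x) + τ' • v' (v x) + ν' • mcross (v' x) (v' (v x)) := by
      rw [← heq]
      simp only [map_add, map_sub, LinearEquiv.symm_apply_apply]
      abel
    have P' : ∀ z, eta (v x₀ + a - x₀) z
        = σ' * (eta (v x) z - eta x z) + τ' * eta (v x) z
          + ν' * eta (mcross x (v x)) z := by
      intro z
      have h := congrArg (fun u => eta u (v' z)) heq2
      rw [hv', eta_combo, hv', hv', mcross_lorentz v' hdet' x (v x) z] at h
      exact h
    have P : ∀ z, eta (v x₀ + a - x₀) z
        = σ * (eta (v x) z - eta x z) + τ * eta (v x) z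
          + ν * eta (mcross x (v x)) z := by
      intro z
      rw [hστν, eta_combo]
    have h1 := (P' x).symm.trans (P x)
    have h2 := (P' (v x)).symm.trans (P (v x))
    have h3 := (P' (mcross x (v x))).symm.trans (P (mcross x (v x)))
    rw [cyx, hx, cmx] at h1
    rw [cyy, cxy, cmy] at h2
    rw [cym, cxm, cmm] at h3
    have hν : ν' = ν := by
      have h9 : (ν' - ν) * (c ^ 2 - 1) = 0 := by linear_combination h3
      rcases mul_eq_zero.mp h9 with h | h
      · linarith
      · nlinarith
    have hσ : σ' = σ := by
      have h8 : (σ' - σ) * ((1 - c) * (1 + c)) = 0 := by linear_combination h1 - c * h2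
      rcases mul_eq_zero.mp h8 with h | h
      · linarith
      · nlinarith
    have hτ : τ' = τ := by linear_combination (c - 1) * hσ - h2
    exact ⟨hσ, hτ, hν⟩
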